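/- Assume the standing hypotheses (i) and (ii), let β be a nonzero real number, and suppose the family (N(s)^{-β})_{s ∈ S} is summable. If μ₁ and μ₂ are β-scaling Borel probability measures on X whose normalized restrictions to Y₀ agree, i.e. μ₁(A)/μ₁(Y₀) = μ₂(A)/μ₂(Y₀) for every Borel set A ⊆ Y₀, then μ₁ = μ₂. In other words, the map μ ↦ μ(Y₀)^{-1}·μ|_{Y₀} is injective on β-scaling Borel probability measures. -/

import Mathlib

/-!
By (ii) a scaling measure `μ` gives no mass to the sets `Yₙ`, so by (i), for every open `U ⊇ Y₀`,
almost all of `Y` lies in `⋃_{s ∈ S} s·U`. The part of `Y` covered by `⋃ s·U` but not by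
`⋃ s·Y₀` has mass at most `(∑_{s ∈ S} N(s)^{-β}) · μ(U \ Y₀)`, which outer regularity makes
arbitrarily small. Hence `μ` is carried by the sets `s·Y₀ ∩ Y`, on each of which the scaling
identity expresses `μ` through `μ|_{Y₀}`. So the measures `μᵢ(Y₀)⁻¹ • μᵢ`, whose restrictions to
`Y₀` agree by hypothesis, are equal, and total mass one forces `μ₁ = μ₂`.
-/

open Pointwise MeasureTheory

/-- The boundary set `Y₀ = Y \ ⋃_{γ : N(γ) > 1} γ·Y` of the cocycle determined by `N`. -/
def boundarySet {Γ X : Type*} [Group Γ] [MulAction Γ X] (N : Γ →* ℝ) (Y : Set X) : Set X :=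
  Y \ ⋃ (γ : Γ) (_ : 1 < N γ), γ • Y

/-- The set `S = {γ ∈ Γ : γ·Y₀ ∩ Y ≠ ∅}`. -/
def Sset {Γ X : Type*} [Group Γ] [MulAction Γ X] (N : Γ →* ℝ) (Y : Set X) : Set Γ :=
  {γ : Γ | ((γ • boundarySet N Y) ∩ Y).Nonempty}

/-- A Borel probability measure `μ` on `X` is `β`-scaling if it is concentrated on `Y` and
`μ(γ·A) = N(γ)^{-β}·μ(A)` for every `γ ∈ Γ` and every Borel set `A ⊆ Y` with `γ·A ⊆ Y`. -/
def IsScaling {Γ X : Type*} [Group Γ] [MulAction Γ X] [MeasurableSpace X]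
    (N : Γ →* ℝ) (Y : Set X) (β : ℝ) (μ : Measure X) : Prop :=
  μ Yᶜ = 0 ∧ ∀ (γ : Γ) (A : Set X), MeasurableSet A → A ⊆ Y → γ • A ⊆ Y →
    μ (γ • A) = ENNReal.ofReal (N γ ^ (-β)) * μ A

namespace MeasureTheory.Measure

lemma eq_of_smul_eq_smul {α : Type*} [MeasurableSpace α] {μ ν : Measure α}
    [IsProbabilityMeasure μ] [IsProbabilityMeasure ν] {a b : ENNReal} (ha₀ : a ≠ 0)
    (ha : a ≠ ⊤) (h : a • μ = b • ν) : μ = ν := by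
  have hab : a = b := by simpa using congrArg (· Set.univ) h
  subst hab
  ext s
  exact (ENNReal.mul_right_inj ha₀ ha).1 (by simpa using congrArg (· s) h)

end MeasureTheory.Measure

lemma isClosed_boundarySet {Γ X : Type*} [Group Γ] [TopologicalSpace X] [MulAction Γ X]
    [ContinuousConstSMul Γ X] (N : Γ →* ℝ) {Y : Set X} (hY : IsClopen Y) :
    IsClosed (boundarySet N Y) :=
  hY.isClosed.sdiff (isOpen_biUnion fun γ _ => hY.isOpen.smul γ)

lemma Real.rpow_neg_ne_one {x β : ℝ} (hx : 0 < x) (hx₁ : x ≠ 1) (hβ : β ≠ 0) :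
    x ^ (-β) ≠ 1 := fun h =>
  hx₁ ((Real.rpow_left_inj hx.le zero_le_one (neg_ne_zero.2 hβ)).1
    (h.trans (Real.one_rpow _).symm))

namespace IsScaling

variable {Γ X : Type*} [Group Γ] [MulAction Γ X] [MeasurableSpace X]
  {N : Γ →* ℝ} {Y : Set X} {β : ℝ} {ν ν' : Measure X}

lemma zero : IsScaling N Y β (0 : Measure X) :=
  ⟨rfl, fun _ _ _ _ _ => by simp⟩

lemma smul (hν : IsScaling N Y β ν) (c : ENNReal) : IsScaling N Y β (c • ν) := by
  refine ⟨by simp [hν.1], fun γ A hA hAY hγA => ?_⟩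
  simp only [Measure.smul_apply, smul_eq_mul, hν.2 γ A hA hAY hγA]
  ring

lemma measure_eq_zero_of_smul_eq [IsFiniteMeasure ν] (hν : IsScaling N Y β ν) (hβ : β ≠ 0)
    {γ : Γ} (hγ₀ : 0 < N γ) (hγ₁ : N γ ≠ 1) {A : Set X} (hA : MeasurableSet A) (hAY : A ⊆ Y)
    (hγA : γ • A = A) : ν A = 0 := by
  by_contra hνA
  have h := hν.2 γ A hA hAY (hγA.symm ▸ hAY)
  rw [hγA, eq_comm, ENNReal.mul_eq_right hνA (measure_ne_top ν A), ENNReal.ofReal_eq_one] at h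
  exact Real.rpow_neg_ne_one hγ₀ hγ₁ hβ h

lemma measure_eq_restrict_inv_smul [MeasurableConstSMul Γ X] (hν : IsScaling N Y β ν) {γ : Γ}
    {A B : Set X} (hA : MeasurableSet A) (hAY : A ⊆ Y) (hBY : B ⊆ Y) (hAB : A ⊆ γ • B) :
    ν A = ENNReal.ofReal (N γ ^ (-β)) * ν.restrict B (γ⁻¹ • A) := by
  have hγA : γ⁻¹ • A ⊆ B := Set.smul_set_subset_iff_subset_inv_smul_set.2 (by rwa [inv_inv])
  rw [Measure.restrict_eq_self _ hγA, ← hν.2 γ _ (hA.const_smul _) (hγA.trans hBY)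
    (by rwa [smul_inv_smul]), smul_inv_smul]

lemma measure_smul_inter_le [MeasurableConstSMul Γ X] (hν : IsScaling N Y β ν)
    (hY : MeasurableSet Y) (γ : Γ) {A : Set X} (hA : MeasurableSet A) (hAY : A ⊆ Y) :
    ν (γ • A ∩ Y) ≤ ENNReal.ofReal (N γ ^ (-β)) * ν A := by
  rw [hν.measure_eq_restrict_inv_smul ((hA.const_smul γ).inter hY) Set.inter_subset_right hAY
    Set.inter_subset_left]
  exact mul_le_mul_right ((measure_mono (Set.subset_univ _)).trans
    (Measure.restrict_apply_univ A).le) _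

lemma measure_iUnion_smul_inter_le [MeasurableConstSMul Γ X] (hν : IsScaling N Y β ν)
    (hY : MeasurableSet Y) {ι : Type*} [Countable ι] (g : ι → Γ) {A : Set X}
    (hA : MeasurableSet A) (hAY : A ⊆ Y) :
    ν ((⋃ i, g i • A) ∩ Y) ≤ (∑' i, ENNReal.ofReal (N (g i) ^ (-β))) * ν A := by
  rw [Set.iUnion_inter, ← ENNReal.tsum_mul_right]
  exact (measure_iUnion_le _).trans
    (ENNReal.tsum_le_tsum fun i => hν.measure_smul_inter_le hY (g i) hA hAY)

lemma measure_diff_iUnion_smul_eq_zero [MeasurableConstSMul Γ X] [TopologicalSpace X]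
    [OpensMeasurableSpace X] [IsFiniteMeasure ν] [ν.OuterRegular] (hν : IsScaling N Y β ν)
    (hY : IsOpen Y) {ι : Type*} [Countable ι] {g : ι → Γ}
    (hsum : Summable fun i => N (g i) ^ (-β)) {B E : Set X} (hB : MeasurableSet B)
    (hBY : B ⊆ Y) (hE : ν E = 0) (hcov : ∀ U, IsOpen U → B ⊆ U → Y \ (⋃ i, g i • U) ⊆ E) :
    ν (Y \ ⋃ i, g i • B) = 0 := by
  set C := ∑' i, ENNReal.ofReal (N (g i) ^ (-β))
  have hC : C ≠ ⊤ := ENNReal.tsum_coe_ne_top_iff_summable.2 hsum.toNNReal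
  have hbound : ∀ U, IsOpen U → B ⊆ U → ν (Y \ ⋃ i, g i • B) ≤ C * ν (U \ B) := by
    intro U hU hBU
    have hsub : Y \ (⋃ i, g i • B) ⊆ E ∪ (⋃ i, g i • ((U ∩ Y) \ B)) ∩ Y := by
      rintro x ⟨hxY, hxB⟩
      by_cases hx : x ∈ ⋃ i, g i • (U ∩ Y)
      · obtain ⟨i, u, hu, rfl⟩ := Set.mem_iUnion.1 hx
        refine Or.inr ⟨Set.mem_iUnion.2 ⟨i, u, ⟨hu, fun huB => hxB ?_⟩, rfl⟩, hxY⟩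
        exact Set.mem_iUnion.2 ⟨i, Set.smul_mem_smul_set huB⟩
      · exact Or.inl (hcov _ (hU.inter hY) (Set.subset_inter hBU hBY) ⟨hxY, hx⟩)
    calc ν (Y \ ⋃ i, g i • B) ≤ ν E + ν ((⋃ i, g i • ((U ∩ Y) \ B)) ∩ Y) :=
          (measure_mono hsub).trans (measure_union_le _ _)
      _ ≤ C * ν ((U ∩ Y) \ B) := by
          rw [hE, zero_add]
          exact hν.measure_iUnion_smul_inter_le hY.measurableSet g
            ((hU.inter hY).measurableSet.diff hB) (Set.sdiff_subset.trans Set.inter_subset_right)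
      _ ≤ C * ν (U \ B) := by gcongr; exact Set.inter_subset_left
  refine le_antisymm (ENNReal.le_of_forall_pos_le_add fun ε hε _ => ?_) zero_le
  obtain ⟨U, hBU, hU, -, hUB⟩ := hB.exists_isOpen_sdiff_lt (measure_ne_top ν B)
    (ENNReal.div_pos (ENNReal.coe_ne_zero.2 hε.ne') hC).ne'
  calc ν (Y \ ⋃ i, g i • B) ≤ C * ν (U \ B) := hbound U hU hBU
    _ ≤ C * (ε / C) := by gcongr
    _ ≤ 0 + ε := by rw [zero_add]; exact ENNReal.mul_div_le

lemma ext_of_restrict_eq [MeasurableConstSMul Γ X] (hν : IsScaling N Y β ν)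
    (hν' : IsScaling N Y β ν') (hY : MeasurableSet Y) {ι : Type*} [Countable ι] (g : ι → Γ)
    {B : Set X} (hB : MeasurableSet B) (hBY : B ⊆ Y) (hνB : ν (Y \ ⋃ i, g i • B) = 0)
    (hν'B : ν' (Y \ ⋃ i, g i • B) = 0) (h : ν.restrict B = ν'.restrict B) : ν = ν' := by
  have hfull : ∀ μ : Measure X, IsScaling N Y β μ → μ (Y \ ⋃ i, g i • B) = 0 →
      μ.restrict (⋃ i, g i • B ∩ Y) = μ := by
    intro μ hμ hμB
    refine Measure.restrict_eq_self_of_ae_mem (mem_ae_iff.2 ?_)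
    refine measure_mono_null (fun x hx => ?_) (measure_union_null hμ.1 hμB)
    rw [← Set.iUnion_inter] at hx
    by_cases hxY : x ∈ Y
    exacts [Or.inr ⟨hxY, fun hxB => hx ⟨hxB, hxY⟩⟩, Or.inl hxY]
  rw [← hfull ν hν hνB, ← hfull ν' hν' hν'B, Measure.restrict_iUnion_congr]
  intro i
  ext A hA
  have hAi : MeasurableSet (A ∩ (g i • B ∩ Y)) := hA.inter ((hB.const_smul _).inter hY)
  have hAiY : A ∩ (g i • B ∩ Y) ⊆ Y := fun x hx => hx.2.2
  have hAiB : A ∩ (g i • B ∩ Y) ⊆ g i • B := fun x hx => hx.2.1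
  rw [Measure.restrict_apply hA, Measure.restrict_apply hA,
    hν.measure_eq_restrict_inv_smul hAi hAiY hBY hAiB, h,
    ← hν'.measure_eq_restrict_inv_smul hAi hAiY hBY hAiB]

end IsScaling

theorem scaling_measure_determined_by_restriction_to_boundary_general
    {Γ X : Type*} [Group Γ] [Countable Γ]
    [TopologicalSpace X] [LocallyCompactSpace X] [SecondCountableTopology X] [T2Space X]
    [MeasurableSpace X] [BorelSpace X] [MulAction Γ X] [ContinuousConstSMul Γ X]
    (N : Γ →* ℝ) (hN : ∀ γ, 0 < N γ)
    (Y : Set X) (hY : IsClopen Y)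
    (Yn : ℕ → Set X) (γn : ℕ → Γ)
    (hYnMeas : ∀ n, MeasurableSet (Yn n)) (hYnSub : ∀ n, Yn n ⊆ Y)
    (hi : ∀ U : Set X, IsOpen U → boundarySet N Y ⊆ U →
      Y \ (⋃ s ∈ Sset N Y, s • U) ⊆ ⋃ n, Yn n)
    (hii : ∀ n, N (γn n) ≠ 1 ∧ γn n • Yn n = Yn n)
    (β : ℝ) (hβ : β ≠ 0)
    (hsum : Summable (fun s : Sset N Y => N s.1 ^ (-β)))
    (μ₁ μ₂ : Measure X) [IsProbabilityMeasure μ₁] [IsProbabilityMeasure μ₂]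
    (hμ₁ : IsScaling N Y β μ₁) (hμ₂ : IsScaling N Y β μ₂)
    (hagree : ∀ A : Set X, MeasurableSet A → A ⊆ boundarySet N Y →
      μ₁ A / μ₁ (boundarySet N Y) = μ₂ A / μ₂ (boundarySet N Y)) :
    μ₁ = μ₂ := by
  set Y₀ := boundarySet N Y
  have hYm : MeasurableSet Y := hY.isClosed.measurableSet
  have hY₀ : MeasurableSet Y₀ := (isClosed_boundarySet N hY).measurableSet
  have hY₀Y : Y₀ ⊆ Y := Set.sdiff_subset
  have hcover : ∀ (μ : Measure X) [IsFiniteMeasure μ], IsScaling N Y β μ →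
      μ (Y \ ⋃ s : Sset N Y, (s : Γ) • Y₀) = 0 := by
    intro μ _ hμ
    refine hμ.measure_diff_iUnion_smul_eq_zero hY.isOpen hsum hY₀ hY₀Y
      (measure_iUnion_null fun n => hμ.measure_eq_zero_of_smul_eq hβ (hN _) (hii n).1
        (hYnMeas n) (hYnSub n) (hii n).2) fun U hU hY₀U => ?_
    simpa only [Set.biUnion_eq_iUnion] using hi U hU hY₀U
  have hY₀_ne_zero : ∀ (μ : Measure X) [IsProbabilityMeasure μ], IsScaling N Y β μ →
      μ Y₀ ≠ 0 := by
    intro μ _ hμ hμY₀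
    refine IsProbabilityMeasure.ne_zero μ (hμ.ext_of_restrict_eq IsScaling.zero hYm
      (fun s : Sset N Y => (s : Γ)) hY₀ hY₀Y (hcover μ hμ) (by simp) ?_)
    rw [Measure.restrict_eq_zero.2 hμY₀, Measure.restrict_zero]
  refine Measure.eq_of_smul_eq_smul (a := (μ₁ Y₀)⁻¹) (b := (μ₂ Y₀)⁻¹)
    (ENNReal.inv_ne_zero.2 (measure_ne_top _ _)) (ENNReal.inv_ne_top.2 (hY₀_ne_zero μ₁ hμ₁)) ?_
  refine (hμ₁.smul _).ext_of_restrict_eq (hμ₂.smul _) hYm (fun s : Sset N Y => (s : Γ)) hY₀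
    hY₀Y (by rw [Measure.smul_apply, hcover μ₁ hμ₁, smul_zero])
    (by rw [Measure.smul_apply, hcover μ₂ hμ₂, smul_zero]) ?_
  ext A hA
  simp only [Measure.restrict_apply hA, Measure.smul_apply, smul_eq_mul,
    ← ENNReal.div_eq_inv_mul]
  exact hagree _ (hA.inter hY₀) Set.inter_subset_right

/-- Under the standing hypotheses (i) and (ii), for a nonzero `β ∈ ℝ` such
that `(N(s)^{-β})_{s ∈ S}` is summable, a `β`-scaling Borel probability measure on `X` is
determined by its normalized restriction to `Y₀`: if two such measures have the same
normalized restriction to `Y₀`, they are equal. -/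
theorem scaling_measure_determined_by_restriction_to_boundary
    {Γ X : Type*} [Group Γ] [Countable Γ]
    [TopologicalSpace X] [LocallyCompactSpace X] [SecondCountableTopology X] [T2Space X]
    [MeasurableSpace X] [BorelSpace X] [MulAction Γ X] [ContinuousConstSMul Γ X]
    (N : Γ →* ℝ) (hN : ∀ γ, 0 < N γ)
    (Y : Set X) (hY : IsClopen Y) (hYcov : (⋃ γ : Γ, γ • Y) = Set.univ)
    (Yn : ℕ → Set X) (γn : ℕ → Γ)
    (hYnMeas : ∀ n, MeasurableSet (Yn n)) (hYnSub : ∀ n, Yn n ⊆ Y)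
    (hi : ∀ U : Set X, IsOpen U → boundarySet N Y ⊆ U →
      Y \ (⋃ s ∈ Sset N Y, s • U) ⊆ ⋃ n, Yn n)
    (hii : ∀ n, N (γn n) ≠ 1 ∧ γn n • Yn n = Yn n)
    (β : ℝ) (hβ : β ≠ 0)
    (hsum : Summable (fun s : Sset N Y => N s.1 ^ (-β)))
    (μ₁ μ₂ : Measure X) [IsProbabilityMeasure μ₁] [IsProbabilityMeasure μ₂]
    (hμ₁ : IsScaling N Y β μ₁) (hμ₂ : IsScaling N Y β μ₂)
    (hagree : ∀ A : Set X, MeasurableSet A → A ⊆ boundarySet N Y →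
      μ₁ A / μ₁ (boundarySet N Y) = μ₂ A / μ₂ (boundarySet N Y)) :
    μ₁ = μ₂ :=
  scaling_measure_determined_by_restriction_to_boundary_general N hN Y hY Yn γn hYnMeas hYnSub hi
    hii β hβ hsum μ₁ μ₂ hμ₁ hμ₂ hagree
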